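/- Strong monotonicity is properly more restrictive than monotonicity for bounded memory states learning with finitely many states: [TxtBMS*SMonEx] is a proper subset of [TxtBMS*MonEx]. -/

import Mathlib

/-!
Common framework: learning languages (c.e. subsets of ℕ) in the limit from texts,
by partial computable learners; iterative learners and bounded memory states (BMS)
learners; the usual learning restrictions.
-/

namespace BMSLearning

/-- Input alphabet `Σ = ℕ ∪ {#}`; `none` plays the role of the pause symbol `#`. -/
abbrev Sig : Type := Option ℕ

/-- Output alphabet `Ω = ℕ ∪ {?}`; `none` plays the role of `?`. -/
abbrev Hyp : Type := Option ℕ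

/-- A fixed acceptable programming system `φ`. -/
noncomputable def phi (p : ℕ) : ℕ →. ℕ :=
  Nat.Partrec.Code.eval (Denumerable.ofNat Nat.Partrec.Code p)

/-- `W p` is the domain of the `p`-th partial computable function. -/
noncomputable def W (p : ℕ) : Set ℕ := {x | (phi p x).Dom}

/-- A learner is a partial (computable) function from finite sequences over `Σ` to `Ω`. -/
abbrev Learner : Type := List Sig →. Hyp

/-- `T[t]`: the initial segment of length `t` of the text `T`. -/
def seg (T : ℕ → Sig) (t : ℕ) : List Sig := (List.range t).map T

/-- The content of a finite sequence. -/
def cnt (σ : List Sig) : Set ℕ := {x | some x ∈ σ}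

/-- The content of an infinite sequence. -/
def cntT (T : ℕ → Sig) : Set ℕ := {x | ∃ t, T t = some x}

/-- `T` is a text for `L`. -/
def IsTextFor (T : ℕ → Sig) (L : Set ℕ) : Prop := cntT T = L

/-- The learner `M` outputs the (proper) hypothesis `e ∈ ℕ` at time `t` on text `T`. -/
def outputs (M : Learner) (T : ℕ → Sig) (t : ℕ) (e : ℕ) : Prop :=
  M (seg T t) = Part.some (some e)

/-- `M` Ex-learns `L` from the text `T`: the learning sequence is defined, and from
some point on, a correct hypothesis is output and never changed (except possibly to `?`). -/
def Ex (M : Learner) (L : Set ℕ) (T : ℕ → Sig) : Prop :=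
  (∀ t, (M (seg T t)).Dom) ∧
  ∃ t₀ e, outputs M T t₀ e ∧ W e = L ∧
    ∀ t, t₀ ≤ t → ∀ h : Hyp, M (seg T t) = Part.some h → h ≠ none → h = some e

/-- `M` Ex-converges on the text `T` (syntactic convergence, no correctness demanded). -/
def ExConverges (M : Learner) (T : ℕ → Sig) : Prop :=
  ∃ t₀ h₀, M (seg T t₀) = Part.some h₀ ∧
    ∀ t, t₀ ≤ t → ∀ h : Hyp, M (seg T t) = Part.some h → h ≠ none → h = h₀

/-- The iterated state function `s*` of a BMS learner with state transition function `sf`: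
`s*(ε) = 0` and `s*(σ⌢x) = sf(s*(σ), x)`. -/
def sStar (sf : ℕ × Sig →. ℕ) (σ : List Sig) : Part ℕ :=
  σ.foldl (fun q x => q.bind fun a => sf (a, x)) (Part.some 0)

/-- The learner determined by a hypothesis generating function `hf` and a state
transition function `sf`:  `M(ε) = ?` and `M(σ⌢x) = hf(s*(σ), x)`. -/
noncomputable def bmsLearner (hf : ℕ × Sig →. Hyp) (sf : ℕ × Sig →. ℕ) : Learner :=
  fun τ =>
    if hτ : τ = [] then Part.some (none : Hyp)
    else (sStar sf τ.dropLast).bind fun q => hf (q, τ.getLast hτ)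

/-- `(hf, sf)` is an admissible presentation of a BMS learner: both functions are
partial computable and they have equal domains. -/
def BMSPair (hf : ℕ × Sig →. Hyp) (sf : ℕ × Sig →. ℕ) : Prop :=
  Partrec hf ∧ Partrec sf ∧ ∀ p : ℕ × Sig, (hf p).Dom ↔ (sf p).Dom

/-- `BMS*`: the BMS learner with state transition function `sf` uses only finitely
many states on the text `T`. -/
def StatesFin (sf : ℕ × Sig →. ℕ) (T : ℕ → Sig) : Prop :=
  {q : ℕ | ∃ t, sStar sf (seg T t) = Part.some q}.Finite

/-- The iterative learner determined by the hypothesis generating function `hf`: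
`M(ε) = ?` and `M(σ⌢x) = hf(M(σ), x)`. -/
def itLearner (hf : Hyp × Sig →. Hyp) : Learner :=
  fun τ => τ.foldl (fun q x => q.bind fun a => hf (a, x)) (Part.some (none : Hyp))

/-- `[TxtBMS*δEx]`: the classes of languages Ex-learnable from texts under the
restriction `δ` by a BMS learner using finitely many states on each text
for a language of the class. -/
def TxtBMSstarEx (δ : Learner → (ℕ → Sig) → Prop) : Set (Set (Set ℕ)) :=
  {ℒ | ∃ hf sf, BMSPair hf sf ∧
      ∀ L ∈ ℒ, ∀ T, IsTextFor T L →
        Ex (bmsLearner hf sf) L T ∧ StatesFin sf T ∧ δ (bmsLearner hf sf) T}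

/-- `[ItTxtδEx]`: the classes of languages Ex-learnable from texts under the
restriction `δ` by an iterative learner. -/
def ItTxtEx (δ : Learner → (ℕ → Sig) → Prop) : Set (Set (Set ℕ)) :=
  {ℒ | ∃ hf, Partrec hf ∧
      ∀ L ∈ ℒ, ∀ T, IsTextFor T L → Ex (itLearner hf) L T ∧ δ (itLearner hf) T}

/-! ### Learning restrictions -/

/-- The trivial restriction `T`. -/
def Triv : Learner → (ℕ → Sig) → Prop := fun _ _ => True

/-- Conservative. -/
def Conv (M : Learner) (T : ℕ → Sig) : Prop :=
  ∀ s t, s ≤ t → ∀ es et : ℕ, outputs M T s es → outputs M T t et →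
    cnt (seg T t) ⊆ W es → es = et

/-- Decisive. -/
def Dec (M : Learner) (T : ℕ → Sig) : Prop :=
  ∀ r s t, r ≤ s → s ≤ t → ∀ er es et : ℕ,
    outputs M T r er → outputs M T s es → outputs M T t et →
    W er = W et → W er = W es

/-- Cautious. -/
def Caut (M : Learner) (T : ℕ → Sig) : Prop :=
  ∀ s t, s ≤ t → ∀ es et : ℕ, outputs M T s es → outputs M T t et →
    ¬ (W et ⊂ W es)

/-- Weakly monotonic. -/
def WMon (M : Learner) (T : ℕ → Sig) : Prop :=
  ∀ s t, s ≤ t → ∀ es et : ℕ, outputs M T s es → outputs M T t et →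
    cnt (seg T t) ⊆ W es → W es ⊆ W et

/-- Monotonic. -/
def Mon (M : Learner) (T : ℕ → Sig) : Prop :=
  ∀ s t, s ≤ t → ∀ es et : ℕ, outputs M T s es → outputs M T t et →
    W es ∩ cntT T ⊆ W et ∩ cntT T

/-- Strongly monotonic. -/
def SMon (M : Learner) (T : ℕ → Sig) : Prop :=
  ∀ s t, s ≤ t → ∀ es et : ℕ, outputs M T s es → outputs M T t et →
    W es ⊆ W et

/-- Non-U-shaped. -/
def NU (M : Learner) (T : ℕ → Sig) : Prop :=
  ∀ r s t, r ≤ s → s ≤ t → ∀ er es et : ℕ,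
    outputs M T r er → outputs M T s es → outputs M T t et →
    W er = cntT T → W et = cntT T → W er = W es

/-- Strongly non-U-shaped. -/
def SNU (M : Learner) (T : ℕ → Sig) : Prop :=
  ∀ r s t, r ≤ s → s ≤ t → ∀ er et : ℕ,
    outputs M T r er → outputs M T t et →
    W er = cntT T → W et = cntT T → M (seg T s) = Part.some (some er)

/-- Strongly decisive. -/
def SDec (M : Learner) (T : ℕ → Sig) : Prop :=
  ∀ r s t, r ≤ s → s ≤ t → ∀ er et : ℕ,
    outputs M T r er → outputs M T t et →
    W er = W et → M (seg T s) = Part.some (some er)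

/-- Witness-based. -/
def Wb (M : Learner) (T : ℕ → Sig) : Prop :=
  ∀ r s t, r < s → s ≤ t → ∀ er et : ℕ,
    outputs M T r er → outputs M T t et →
    M (seg T s) ≠ Part.some (some er) →
    (cnt (seg T s) ∩ (W et \ W er)).Nonempty

/-- A predicate on (learner, text) pairs allows for simulation on equivalent text. -/
def AFSOET (δ : Learner → (ℕ → Sig) → Prop) : Prop :=
  ∀ simu : ℕ → ℕ, Monotone simu → (∀ x, ∃ t, x ≤ simu t) →
    ∀ M M' : Learner, Partrec M → Partrec M' →
      ∀ T T' : ℕ → Sig,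
        (∀ t, cnt (seg T' t) = cnt (seg T (simu t))) →
        (∀ t, M' (seg T' t) = M (seg T (simu t))) →
        δ M T → δ M' T'

/-- The hypotheses (partial values in `Ω`) `h` and `h'` are semantically equal:
both undefined, both `?`, or both proper hypotheses describing the same language. -/
def SemEqAt (h h' : Part Hyp) : Prop :=
  (h.Dom ↔ h'.Dom) ∧ (h = Part.some (none : Hyp) ↔ h' = Part.some (none : Hyp)) ∧
  ∀ e e' : ℕ, h = Part.some (some e) → h' = Part.some (some e') → W e = W e'

/-- A restriction is semantic: it depends only on the text and the sequence of sets
described by the hypotheses. -/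
def Semantic (δ : Learner → (ℕ → Sig) → Prop) : Prop :=
  ∀ M M' : Learner, Partrec M → Partrec M' → ∀ T : ℕ → Sig,
    (∀ t, SemEqAt (M (seg T t)) (M' (seg T t))) → δ M T → δ M' T

/-- `σ` is a locking sequence for `M` on `L`. -/
def LockingSeq (M : Learner) (L : Set ℕ) (σ : List Sig) : Prop :=
  cnt σ ⊆ L ∧ (∃ e : ℕ, M σ = Part.some (some e) ∧ W e = L) ∧
    ∀ τ : List Sig, cnt τ ⊆ L → M (σ ++ τ) = M σ

/-- `M` is strongly locking on `L`. -/
def StronglyLocking (M : Learner) (L : Set ℕ) : Prop :=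
  ∀ T, IsTextFor T L → ∃ t, LockingSeq M L (seg T t)

/-- The fixed computable bijection `π : ℕ → Ω` with `π 0 = ?` and `π (i+1) = i`. -/
def piFun : ℕ → Hyp
  | 0 => none
  | (i + 1) => some i

/-- The inverse `π⁻¹ : Ω → ℕ` of `piFun`. -/
def piInv : Hyp → ℕ
  | none => 0
  | some e => e + 1

end BMSLearning

/-!
The class separating the two restrictions consists of the even numbers `Lang 0` and the finite
languages `Lang (k + 1) = {0, 2, …, 2k} ∪ {2k + 1}`. A learner with states `0` and `k + 1`
conjectures the evens until it sees an odd datum `2k + 1` and then `Lang (k + 1)` for good; the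
evens it thereby withdraws all lie outside the target, so it is monotonic. No learner of the
class is strongly monotonic: after it has settled on the evens on `0, 2, …, 2t₀ - 2`, continuing
this prefix to a text for `Lang (t₀ + 1)` makes it conjecture two incomparable languages.
-/

namespace BMSLearning

open Nat.Partrec (Code)

theorem exists_computable_W_eq {L : ℕ → Set ℕ} (hL : REPred fun p : ℕ × ℕ => p.2 ∈ L p.1) :
    ∃ idx : ℕ → ℕ, Computable idx ∧ ∀ k, W (idx k) = L k := by
  have hf : Nat.Partrec fun n =>
      (Part.assert (n.unpair.2 ∈ L n.unpair.1) fun _ => Part.some ()).map fun _ => 0 :=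
    Partrec.nat_iff.1 ((hL.comp Computable.unpair).map (Computable.const 0).to₂)
  obtain ⟨c, hc⟩ := Code.exists_code.1 hf
  refine ⟨fun k => Encodable.encode (c.curry k),
    (Primrec.encode.comp (Code.primrec₂_curry.comp (.const c) .id)).to_comp, fun k => ?_⟩
  ext x
  simp [W, phi, Code.eval_curry, hc, Part.assert]

section TotalBMS

variable (g : ℕ × Sig → Hyp) (st : ℕ × Sig → ℕ)

theorem sStar_lift (σ : List Sig) :
    sStar (st : ℕ × Sig →. ℕ) σ = Part.some (σ.foldl (fun q x => st (q, x)) 0) := by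
  suffices ∀ a, σ.foldl (fun q x => q.bind fun a => (st : ℕ × Sig →. ℕ) (a, x)) (Part.some a) =
      Part.some (σ.foldl (fun q x => st (q, x)) a) from this 0
  induction σ with
  | nil => exact fun _ => rfl
  | cons x σ ih => exact fun a => by simpa using ih (st (a, x))

theorem bmsLearner_lift_nil : bmsLearner (g : ℕ × Sig →. Hyp) (st : ℕ × Sig →. ℕ) [] =
    Part.some none := by
  simp [bmsLearner]

theorem bmsLearner_lift_concat (σ : List Sig) (x : Sig) :
    bmsLearner (g : ℕ × Sig →. Hyp) (st : ℕ × Sig →. ℕ) (σ ++ [x]) =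
      Part.some (g (σ.foldl (fun q x => st (q, x)) 0, x)) := by
  simp [bmsLearner, sStar_lift]

theorem bmsLearner_lift_dom (σ : List Sig) :
    (bmsLearner (g : ℕ × Sig →. Hyp) (st : ℕ × Sig →. ℕ) σ).Dom := by
  rcases σ.eq_nil_or_concat with rfl | ⟨σ, x, rfl⟩
  · simp [bmsLearner_lift_nil]
  · simp [bmsLearner_lift_concat]

end TotalBMS

theorem seg_succ (T : ℕ → Sig) (t : ℕ) : seg T (t + 1) = seg T t ++ [T t] := by
  simp [seg, List.range_succ]

theorem SMon.mon {M : Learner} {T : ℕ → Sig} (h : SMon M T) : Mon M T :=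
  fun s t hst es et hs ht => Set.inter_subset_inter_left _ (h s t hst es et hs ht)

theorem SMon.subset_or_subset {M : Learner} {T : ℕ → Sig} (h : SMon M T) {s t e e' : ℕ}
    (hs : outputs M T s e) (ht : outputs M T t e') : W e ⊆ W e' ∨ W e' ⊆ W e :=
  (le_total s t).imp (fun hst => h s t hst e e' hs ht) (fun hts => h t s hts e' e ht hs)

theorem txtBMSstarEx_mono {δ δ' : Learner → (ℕ → Sig) → Prop} (h : ∀ M T, δ M T → δ' M T) :
    TxtBMSstarEx δ ⊆ TxtBMSstarEx δ' := by
  rintro ℒ ⟨hf, sf, hpair, hlearn⟩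
  exact ⟨hf, sf, hpair, fun L hL T hT => (hlearn L hL T hT).imp_right (And.imp_right (h _ T))⟩

-- `Lang 0` is the set of even numbers and `Lang (k + 1) = {0, 2, …, 2k} ∪ {2k + 1}`.
def Lang (k : ℕ) : Set ℕ := {x | x + 1 = 2 * k ∨ x % 2 = 0 ∧ (k = 0 ∨ x < 2 * k)}

theorem mem_Lang {k x : ℕ} : x ∈ Lang k ↔ x + 1 = 2 * k ∨ x % 2 = 0 ∧ (k = 0 ∨ x < 2 * k) :=
  Iff.rfl

theorem rePred_mem_Lang : REPred fun p : ℕ × ℕ => p.2 ∈ Lang p.1 := by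
  have h2 : Primrec fun p : ℕ × ℕ => 2 * p.1 := Primrec.nat_mul.comp (.const 2) .fst
  have hodd : PrimrecPred fun p : ℕ × ℕ => p.2 + 1 = 2 * p.1 :=
    Primrec.eq.comp (Primrec.succ.comp .snd) h2
  have heven : PrimrecPred fun p : ℕ × ℕ => p.2 % 2 = 0 :=
    Primrec.eq.comp (Primrec.nat_mod.comp .snd (.const 2)) (.const 0)
  have hzero : PrimrecPred fun p : ℕ × ℕ => p.1 = 0 := Primrec.eq.comp .fst (.const 0)
  have hlt : PrimrecPred fun p : ℕ × ℕ => p.2 < 2 * p.1 := Primrec.nat_lt.comp .snd h2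
  exact (hodd.or (heven.and (hzero.or hlt))).computablePred.to_re

theorem add_one_eq_of_mem_Lang {k x : ℕ} (hx : x ∈ Lang k) (hodd : x % 2 = 1) : x + 1 = 2 * k := by
  rw [mem_Lang] at hx
  omega

-- The pause `#` is read as the even datum `0`, which never changes the state.
def step (p : ℕ × Sig) : ℕ :=
  if p.1 = 0 ∧ p.2.getD 0 % 2 = 1 then p.2.getD 0 / 2 + 1 else p.1

theorem primrec_step : Primrec step := by
  have hn : Primrec fun p : ℕ × Sig => p.2.getD 0 := Primrec.option_getD.comp .snd (.const 0)
  refine Primrec.ite ((Primrec.eq.comp .fst (.const 0)).and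
    (Primrec.eq.comp (Primrec.nat_mod.comp hn (.const 2)) (.const 1)))
    (Primrec.succ.comp (Primrec.nat_div.comp hn (.const 2))) .fst

theorem step_of_ne_zero {q : ℕ} (hq : q ≠ 0) (x : Sig) : step (q, x) = q := by
  simp [step, hq]

theorem step_some_of_odd (q : ℕ) {n : ℕ} (hn : n % 2 = 1) (hq : q = 0 ∨ q = n / 2 + 1) :
    step (q, some n) = n / 2 + 1 := by
  rcases hq with rfl | rfl <;> simp [step, hn]

def stateAt (T : ℕ → Sig) (t : ℕ) : ℕ := (seg T t).foldl (fun q x => step (q, x)) 0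

theorem stateAt_succ (T : ℕ → Sig) (t : ℕ) : stateAt T (t + 1) = step (stateAt T t, T t) := by
  simp [stateAt, seg_succ]

theorem stateAt_eq_of_ne_zero {T : ℕ → Sig} {s t : ℕ} (hs : stateAt T s ≠ 0) (hst : s ≤ t) :
    stateAt T t = stateAt T s := by
  induction t, hst using Nat.le_induction with
  | base => rfl
  | succ t _ ih => rw [stateAt_succ, ih, step_of_ne_zero hs]

def langHyp (idx : ℕ → ℕ) (p : ℕ × Sig) : Hyp := some (idx (step p))

noncomputable def langLearner (idx : ℕ → ℕ) : Learner :=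
  bmsLearner (langHyp idx : ℕ × Sig →. Hyp) (step : ℕ × Sig →. ℕ)

theorem langLearner_seg_succ (idx : ℕ → ℕ) (T : ℕ → Sig) (t : ℕ) :
    langLearner idx (seg T (t + 1)) = Part.some (some (idx (stateAt T (t + 1)))) := by
  rw [langLearner, seg_succ, bmsLearner_lift_concat, stateAt_succ]
  rfl

theorem outputs_langLearner {idx : ℕ → ℕ} {T : ℕ → Sig} {t e : ℕ} :
    outputs (langLearner idx) T t e ↔ 0 < t ∧ idx (stateAt T t) = e := by
  cases t with
  | zero => simp [outputs, langLearner, seg, bmsLearner_lift_nil]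
  | succ t => simp [outputs, langLearner_seg_succ]

section OnText

variable {idx : ℕ → ℕ} {T : ℕ → Sig} {k : ℕ}

theorem stateAt_eq_zero_or (hT : IsTextFor T (Lang k)) (t : ℕ) :
    stateAt T t = 0 ∨ stateAt T t = k := by
  induction t with
  | zero => exact .inl rfl
  | succ t ih =>
    rw [stateAt_succ]
    by_cases h0 : stateAt T t = 0
    · rw [h0]
      cases hx : T t with
      | none => simp [step]
      | some n =>
        have hn : n ∈ Lang k := hT ▸ ⟨t, hx⟩
        by_cases hodd : n % 2 = 1
        · have := add_one_eq_of_mem_Lang hn hodd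
          exact .inr (by simp [step, hodd]; omega)
        · simp [step, hodd]
    · rwa [step_of_ne_zero h0]

theorem exists_forall_stateAt_eq (hT : IsTextFor T (Lang k)) :
    ∃ t₀, ∀ t, t₀ ≤ t → stateAt T t = k := by
  rcases Nat.eq_zero_or_eq_succ_pred k with hk | hk
  · exact ⟨0, fun t _ => by simpa [hk] using stateAt_eq_zero_or hT t⟩
  obtain ⟨s, hs⟩ : 2 * k - 1 ∈ cntT T := hT ▸ (mem_Lang.2 (by omega))
  have hstep : stateAt T (s + 1) = k := by
    have hodd : (2 * k - 1) % 2 = 1 := by omega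
    have hdiv : (2 * k - 1) / 2 + 1 = k := by omega
    have hprev : stateAt T s = 0 ∨ stateAt T s = (2 * k - 1) / 2 + 1 := by
      rw [hdiv]; exact stateAt_eq_zero_or hT s
    rw [stateAt_succ, hs, step_some_of_odd _ hodd hprev, hdiv]
  exact ⟨s + 1, fun t ht => (stateAt_eq_of_ne_zero (by omega) ht).trans hstep⟩

theorem ex_langLearner (hidx : ∀ j, W (idx j) = Lang j) (hT : IsTextFor T (Lang k)) :
    Ex (langLearner idx) (Lang k) T := by
  obtain ⟨t₀, ht₀⟩ := exists_forall_stateAt_eq hT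
  refine ⟨fun t => bmsLearner_lift_dom _ _ _, t₀ + 1, idx k,
    outputs_langLearner.2 ⟨t₀.succ_pos, by rw [ht₀ _ t₀.le_succ]⟩, hidx k, fun t ht _ hh _ => ?_⟩
  obtain ⟨t, rfl⟩ : ∃ t', t = t' + 1 := ⟨t - 1, by omega⟩
  rw [langLearner_seg_succ, ht₀ _ (by omega)] at hh
  exact (Part.some_inj.1 hh).symm

theorem statesFin_step (hT : IsTextFor T (Lang k)) : StatesFin (step : ℕ × Sig →. ℕ) T := by
  refine ((Set.finite_singleton k).insert 0).subset ?_
  rintro q ⟨t, hq⟩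
  rw [sStar_lift] at hq
  exact Part.some_inj.1 hq ▸ stateAt_eq_zero_or hT t

theorem mon_langLearner (hidx : ∀ j, W (idx j) = Lang j) (hT : IsTextFor T (Lang k)) :
    Mon (langLearner idx) T := by
  intro s t hst es et hs ht
  obtain ⟨-, rfl⟩ := outputs_langLearner.1 hs
  obtain ⟨-, rfl⟩ := outputs_langLearner.1 ht
  rcases stateAt_eq_zero_or hT t with h | h
  · have hs : stateAt T s = 0 :=
      by_contra fun hne => hne ((stateAt_eq_of_ne_zero hne hst).symm.trans h)
    rw [h, hs]
  · rw [h, hidx k, hT]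
    exact fun x hx => ⟨hx.2, hx.2⟩

end OnText

theorem range_Lang_mem_txtBMSstarEx_Mon : Set.range Lang ∈ TxtBMSstarEx Mon := by
  obtain ⟨idx, hidx_comp, hidx⟩ := exists_computable_W_eq rePred_mem_Lang
  refine ⟨langHyp idx, step, ⟨?_, primrec_step.to_comp, fun _ => Iff.rfl⟩, ?_⟩
  · exact Computable.option_some.comp (hidx_comp.comp primrec_step.to_comp)
  · rintro _ ⟨k, rfl⟩ T hT
    exact ⟨ex_langLearner hidx hT, statesFin_step hT, mon_langLearner hidx hT⟩

theorem not_Lang_zero_subset_or_subset (k : ℕ) :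
    ¬ (Lang 0 ⊆ Lang (k + 1) ∨ Lang (k + 1) ⊆ Lang 0) := by
  rintro (h | h)
  · have := mem_Lang.1 (h (mem_Lang.2 (.inr ⟨(by omega : (2 * k + 2) % 2 = 0), .inl rfl⟩)))
    omega
  · have := mem_Lang.1 (h (mem_Lang.2 (.inl (by omega : 2 * k + 1 + 1 = 2 * (k + 1)))))
    omega

def evensText (t : ℕ) : Sig := some (2 * t)

def evensThenOdd (n t : ℕ) : Sig := some (if t ≤ n then 2 * t else 2 * n + 1)

theorem isTextFor_evensText : IsTextFor evensText (Lang 0) := by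
  ext x
  simp only [cntT, evensText, Option.some.injEq, Set.mem_ofPred_eq, mem_Lang, true_or, and_true]
  exact ⟨fun ⟨t, ht⟩ => by omega, fun hx => ⟨x / 2, by omega⟩⟩

theorem isTextFor_evensThenOdd (n : ℕ) : IsTextFor (evensThenOdd n) (Lang (n + 1)) := by
  ext x
  simp only [cntT, evensThenOdd, Option.some.injEq, Set.mem_ofPred_eq, mem_Lang]
  refine ⟨fun ⟨t, ht⟩ => by split_ifs at ht <;> omega, fun hx => ?_⟩
  rcases hx with hx | hx
  · exact ⟨n + 1, by rw [if_neg (by omega)]; omega⟩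
  · exact ⟨x / 2, by rw [if_pos (by omega)]; omega⟩

theorem seg_evensThenOdd (n : ℕ) : seg (evensThenOdd n) n = seg evensText n :=
  List.map_congr_left fun t ht => by
    simp [evensThenOdd, evensText, (List.mem_range.1 ht).le]

theorem not_forall_ex_sMon_Lang (M : Learner) :
    ¬ ∀ k T, IsTextFor T (Lang k) → Ex M (Lang k) T ∧ SMon M T := by
  intro h
  obtain ⟨⟨-, t₀, e, hout, hWe, -⟩, -⟩ := h 0 _ isTextFor_evensText
  obtain ⟨⟨-, _, e', hout', hWe', -⟩, hsmon⟩ := h (t₀ + 1) _ (isTextFor_evensThenOdd t₀)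
  have hout₀ : outputs M (evensThenOdd t₀) t₀ e := by rwa [outputs, seg_evensThenOdd]
  exact not_Lang_zero_subset_or_subset t₀ (hWe ▸ hWe' ▸ hsmon.subset_or_subset hout₀ hout')

/-- Strong monotonicity is properly more restrictive than monotonicity
for bounded memory states learning with finitely many states:
`[TxtBMS*SMonEx] ⊊ [TxtBMS*MonEx]`. -/
theorem txtBMSstar_SMon_ssubset_Mon : TxtBMSstarEx SMon ⊂ TxtBMSstarEx Mon := by
  refine ⟨txtBMSstarEx_mono fun _ _ => SMon.mon, fun hsub => ?_⟩
  obtain ⟨_, _, -, hlearn⟩ := hsub range_Lang_mem_txtBMSstarEx_Mon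
  exact not_forall_ex_sMon_Lang _ fun k T hT => (hlearn _ ⟨k, rfl⟩ T hT).imp_right And.right

end BMSLearning
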